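/- arXiv:1207.2530 — 3 statements merged into one kernel-verified Lean document; each statement's English description precedes it below -/
import Mathlib

section
/- Let E : ℂ^n → ℂ^n be the map whose k-th component is the k-th elementary symmetric polynomial e_k(x_1, …, x_n). Then the determinant of the Jacobian matrix of E at a point x ∈ ℂ^n equals ∏_{1 ≤ j < k ≤ n} (x_j − x_k) up to sign; in particular, the Jacobian of E is nonsingular at x if and only if the coordinates x_1, …, x_n are pairwise distinct. -/
/-!
Differentiating `e_{k+1}` in `x_i` gives `e_k` of the variables other than `x_i`, and the
generating function `∏_{j ≠ i} (1 + x_j t) = ∏_j (1 + x_j t) / (1 + x_i t)` expands this as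
`∑_{m ≤ k} e_{k-m}(x) (-x_i)^m`. Hence the Jacobian factors as a lower unitriangular Toeplitz
matrix with entries `e_{k-m}(x)` times the transposed Vandermonde matrix of `-x`, so its
determinant is `∏_{j<k} (x_j - x_k)`.
-/

open Finset

/-- The `k`-th elementary symmetric polynomial map (`k` ranging over `1,…,n`
via `k : Fin n` with `e (k) = e_{k+1}`). -/
noncomputable def esymMap (n : ℕ) (x : Fin n → ℂ) (k : Fin n) : ℂ :=
  ∑ s ∈ Finset.powersetCard ((k : ℕ) + 1) (Finset.univ : Finset (Fin n)),
    ∏ j ∈ s, x j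

/-- The Jacobian matrix of `esymMap` at `x`: entry `(k, i)` is the partial
derivative of the `k`-th component with respect to `x_i`. -/
noncomputable def esymJacobian (n : ℕ) (x : Fin n → ℂ) :
    Matrix (Fin n) (Fin n) ℂ :=
  Matrix.of fun k i => fderiv ℂ (fun y => esymMap n y k) x (Pi.single i 1)

section esymmOn

variable {ι R : Type*} [CommRing R] (x : ι → R)

noncomputable def esymmOn (k : ℕ) (s : Finset ι) : R :=
  ∑ t ∈ powersetCard k s, ∏ j ∈ t, x j

@[simp]
lemma esymmOn_zero (s : Finset ι) : esymmOn x 0 s = 1 := by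
  simp [esymmOn]

variable [DecidableEq ι]

lemma esymmOn_insert_succ {i : ι} {s : Finset ι} (hi : i ∉ s) (k : ℕ) :
    esymmOn x (k + 1) (insert i s) = esymmOn x (k + 1) s + x i * esymmOn x k s := by
  have hi_of_mem {t : Finset ι} (ht : t ∈ powersetCard k s) : i ∉ t :=
    fun hit => hi ((mem_powersetCard.1 ht).1 hit)
  unfold esymmOn
  rw [powersetCard_succ_insert hi, sum_union, sum_image, mul_sum]
  · exact congrArg _ (sum_congr rfl fun t ht => prod_insert (hi_of_mem ht))
  · intro t ht u hu htu
    rw [← erase_insert (hi_of_mem ht), ← erase_insert (hi_of_mem hu), htu]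
  · refine disjoint_right.2 fun t ht hts => ?_
    obtain ⟨u, -, rfl⟩ := mem_image.1 ht
    exact hi ((mem_powersetCard.1 hts).1 (mem_insert_self i u))

lemma esymmOn_eq_sum_esymmOn_insert {i : ι} {s : Finset ι} (hi : i ∉ s) (k : ℕ) :
    esymmOn x k s = ∑ m ∈ range (k + 1), esymmOn x (k - m) (insert i s) * (-x i) ^ m := by
  induction k with
  | zero => simp
  | succ k ih =>
    rw [sum_range_succ', Nat.sub_zero, pow_zero, mul_one, esymmOn_insert_succ x hi, ih,
      mul_sum]
    have hshift : ∀ m ∈ range (k + 1),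
        esymmOn x (k + 1 - (m + 1)) (insert i s) * (-x i) ^ (m + 1)
          = -(x i * (esymmOn x (k - m) (insert i s) * (-x i) ^ m)) := by
      intro m _
      rw [Nat.add_sub_add_right]
      ring
    rw [sum_congr rfl hshift, sum_neg_distrib]
    ring

lemma esymmOn_update_of_notMem {i : ι} {s : Finset ι} (hi : i ∉ s) (a : R) (k : ℕ) :
    esymmOn (Function.update x i a) k s = esymmOn x k s := by
  refine sum_congr rfl fun t ht => prod_congr rfl fun j hj => ?_
  exact Function.update_of_ne (ne_of_mem_of_not_mem ((mem_powersetCard.1 ht).1 hj) hi) a x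

lemma esymmOn_univ_update [Fintype ι] (i : ι) (a : R) (k : ℕ) :
    esymmOn (Function.update x i a) (k + 1) univ
      = esymmOn x (k + 1) (univ.erase i) + a * esymmOn x k (univ.erase i) := by
  have hi : i ∉ univ.erase i := notMem_erase i univ
  conv_lhs => rw [← insert_erase (mem_univ i)]
  rw [esymmOn_insert_succ _ hi, Function.update_self,
    esymmOn_update_of_notMem x hi, esymmOn_update_of_notMem x hi]

end esymmOn

lemma fderiv_apply_single_eq_deriv_update {𝕜 ι F : Type*} [NontriviallyNormedField 𝕜]
    [Fintype ι] [DecidableEq ι] [NormedAddCommGroup F] [NormedSpace 𝕜 F]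
    {f : (ι → 𝕜) → F} {x : ι → 𝕜} (hf : DifferentiableAt 𝕜 f x) (i : ι) :
    fderiv 𝕜 f x (Pi.single i 1) = deriv (fun a => f (Function.update x i a)) (x i) := by
  refine (HasDerivAt.deriv ?_).symm
  exact hf.hasFDerivAt.comp_hasDerivAt_of_eq (x i) (hasDerivAt_update x i (x i))
    (Function.update_eq_self i x).symm

lemma esymMap_eq_esymmOn {n : ℕ} (x : Fin n → ℂ) (k : Fin n) :
    esymMap n x k = esymmOn x (k + 1) univ :=
  rfl

lemma esymJacobian_apply {n : ℕ} (x : Fin n → ℂ) (k i : Fin n) :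
    esymJacobian n x k i = esymmOn x k (univ.erase i) := by
  have hdiff : DifferentiableAt ℂ (fun y => esymMap n y k) x := by
    unfold esymMap
    fun_prop
  have hline : HasDerivAt (fun a => esymMap n (Function.update x i a) k)
      (esymmOn x k (univ.erase i)) (x i) := by
    simp only [esymMap_eq_esymmOn, esymmOn_univ_update]
    simpa using ((hasDerivAt_id (x i)).mul_const (esymmOn x k (univ.erase i))).const_add
      (esymmOn x (k + 1) (univ.erase i))
  rw [esymJacobian, Matrix.of_apply, fderiv_apply_single_eq_deriv_update hdiff, hline.deriv]

noncomputable def esymmToeplitz {n : ℕ} {R : Type*} [CommRing R] (x : Fin n → R) :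
    Matrix (Fin n) (Fin n) R :=
  Matrix.of fun k m => if m ≤ k then esymmOn x (k - m : ℕ) univ else 0

lemma det_esymmToeplitz {n : ℕ} {R : Type*} [CommRing R] (x : Fin n → R) :
    (esymmToeplitz x).det = 1 := by
  rw [Matrix.det_of_isLowerTriangular]
  · simp [esymmToeplitz]
  · intro k m hkm
    have hkm : k < m := hkm
    simp [esymmToeplitz, not_le.2 hkm]

lemma esymJacobian_eq_esymmToeplitz_mul {n : ℕ} (x : Fin n → ℂ) :
    esymJacobian n x = esymmToeplitz x * (Matrix.vandermonde (-x)).transpose := by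
  ext k i
  have hi : i ∉ univ.erase i := notMem_erase i univ
  rw [esymJacobian_apply, esymmOn_eq_sum_esymmOn_insert x hi, insert_erase (mem_univ i),
    Matrix.mul_apply]
  have hsum : ∑ m : Fin n, esymmToeplitz x k m * (Matrix.vandermonde (-x)).transpose m i
      = ∑ m ∈ range n, (if m ≤ (k : ℕ) then esymmOn x (k - m) univ else 0) * (-x i) ^ m := by
    rw [← Fin.sum_univ_eq_sum_range]
    rfl
  rw [hsum, ← sum_subset (range_subset_range.2 k.2)]
  · refine sum_congr rfl fun m hm => ?_
    rw [if_pos (Nat.lt_succ_iff.1 (mem_range.1 hm))]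
  · intro m _ hm
    rw [if_neg (fun hmk => hm (mem_range.2 (Nat.lt_succ_of_le hmk))), zero_mul]

lemma det_esymJacobian {n : ℕ} (x : Fin n → ℂ) :
    (esymJacobian n x).det = (Matrix.vandermonde (-x)).det := by
  rw [esymJacobian_eq_esymmToeplitz_mul, Matrix.det_mul, det_esymmToeplitz,
    Matrix.det_transpose, one_mul]

/-- the Jacobian determinant of the elementary symmetric map
equals `∏_{j<k} (x_j − x_k)` up to sign; in particular it is nonzero iff the
coordinates are pairwise distinct. -/
theorem stmt4 (n : ℕ) (x : Fin n → ℂ) :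
    ((esymJacobian n x).det = ∏ j : Fin n, ∏ k ∈ Finset.Ioi j, (x j - x k) ∨
      (esymJacobian n x).det = -∏ j : Fin n, ∏ k ∈ Finset.Ioi j, (x j - x k)) ∧
    ((esymJacobian n x).det ≠ 0 ↔ Function.Injective x) := by
  rw [det_esymJacobian]
  refine ⟨Or.inl ?_, ?_⟩
  · simp only [Matrix.det_vandermonde, Pi.neg_apply, neg_sub_neg]
  · rw [Matrix.det_vandermonde_ne_zero_iff]
    exact neg_injective.of_comp_iff x
end

section
/- Fix n ∈ ℕ, d ∈ ℕ, distinct positive reals λ_1, …, λ_{d+1}, and distinct positive reals t_1, …, t_{d·n}. For k ∈ [d·n], let b_k = min{j ∈ [d] : j·n ≥ k}, and define the (d·n)×(d·n) matrix T by T_{jk} = Λ_{b_k}(t_j)^{k − (b_k − 1)n} · λ_{d+1}^{b_k·n − k}, where Λ_k(t) = (λ_k − λ_{d+1}) t/(λ_k + t). Then T is nonsingular. -/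
open Finset Polynomial

/-- nonsingularity of the generalized Vandermonde-type matrix
`T_{jk} = Λ_{b_k}(t_j)^{k − (b_k − 1)n} λ_{d+1}^{b_k n − k}` (1-based indices),
where `b_k = min{j ∈ [d] : j·n ≥ k}`, `Λ_k(t) = (λ_k − λ_{d+1}) t/(λ_k + t)`,
the rates `λ_1, …, λ_{d+1}` are distinct and positive, and the evaluation
points `t_1, …, t_{d·n}` are distinct and positive. -/
theorem stmt15 {d n : ℕ} (hd : 0 < d) (hn : 0 < n)
    (lam : ℕ → ℝ) (hpos : ∀ k ∈ Finset.Icc 1 (d + 1), 0 < lam k)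
    (hdist : Set.InjOn lam (Finset.Icc 1 (d + 1)))
    (t : Fin (d * n) → ℝ) (htpos : ∀ j, 0 < t j)
    (htdist : Function.Injective t)
    (b : Fin (d * n) → ℕ)
    (hb : ∀ k : Fin (d * n), IsLeast {j | j ∈ Finset.Icc 1 d ∧ (k : ℕ) + 1 ≤ j * n} (b k)) :
    (Matrix.of fun j k : Fin (d * n) =>
        ((lam (b k) - lam (d + 1)) * t j / (lam (b k) + t j))
            ^ (((k : ℕ) + 1) - (b k - 1) * n) *
          lam (d + 1) ^ (b k * n - ((k : ℕ) + 1))).det ≠ 0 := by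
  classical
  intro hdet
  obtain ⟨v, hv0, hMv⟩ := (Matrix.exists_mulVec_eq_zero_iff).mpr hdet
  set lt : ℝ := lam (d + 1) with hltdef
  have hdmem : (d + 1) ∈ Finset.Icc 1 (d + 1) := by simp
  have hltpos : 0 < lt := hpos (d + 1) hdmem
  -- basic facts about b
  have hbmem : ∀ k : Fin (d * n), b k ∈ Finset.Icc 1 d := fun k => (hb k).1.1
  have hb1 : ∀ k : Fin (d * n), 1 ≤ b k := fun k => (Finset.mem_Icc.mp (hbmem k)).1
  have hb2 : ∀ k : Fin (d * n), b k ≤ d := fun k => (Finset.mem_Icc.mp (hbmem k)).2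
  have hb3 : ∀ k : Fin (d * n), (k : ℕ) + 1 ≤ b k * n := fun k => (hb k).1.2
  have hb4 : ∀ k : Fin (d * n), (b k - 1) * n < (k : ℕ) + 1 := by
    intro k
    by_contra hcon
    push_neg at hcon
    have h1 : 1 ≤ b k - 1 := by
      by_contra h2
      have h3 : b k - 1 = 0 := by omega
      rw [h3, zero_mul] at hcon
      omega
    have h4 : b k ≤ b k - 1 := (hb k).2 ⟨Finset.mem_Icc.mpr ⟨h1, by have := hb2 k; omega⟩, hcon⟩
    have := hb1 k; omega
  have hbn : ∀ k : Fin (d * n), (b k - 1) * n + n = b k * n := by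
    intro k
    obtain ⟨m, hm⟩ := Nat.exists_eq_add_of_le (hb1 k)
    rw [hm]
    have h1 : 1 + m - 1 = m := by omega
    rw [h1]
    ring
  set q : Fin (d * n) → ℕ := fun k => (k : ℕ) + 1 - (b k - 1) * n with hqdef
  have hq1 : ∀ k : Fin (d * n), 1 ≤ q k := fun k => by
    have := hb4 k; simp only [hqdef]; omega
  have hq2 : ∀ k : Fin (d * n), q k ≤ n := fun k => by
    have h3 := hb3 k; have h4 := hb4 k; have h5 := hbn k
    simp only [hqdef]; omega
  have hqsub : ∀ k : Fin (d * n), b k * n - ((k : ℕ) + 1) = n - q k := fun k => by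
    have h3 := hb3 k; have h4 := hb4 k; have h5 := hbn k
    simp only [hqdef]; omega
  have hkval : ∀ k : Fin (d * n), (k : ℕ) + 1 = (b k - 1) * n + q k := fun k => by
    have h4 := hb4 k; simp only [hqdef]; omega
  -- distinctness of lam values
  have hlam_pos : ∀ β ∈ Finset.Icc 1 d, 0 < lam β := by
    intro β hβ
    exact hpos β (by simp at hβ ⊢; omega)
  have hlam_ne_lt : ∀ β ∈ Finset.Icc 1 d, lam β ≠ lt := by
    intro β hβ hcon
    have h1 : β ∈ (Finset.Icc 1 (d + 1) : Finset ℕ) := by simp at hβ ⊢; omega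
    have := hdist (by exact_mod_cast h1) (by exact_mod_cast hdmem) hcon
    simp at hβ; omega
  -- coefficients
  set a : Fin (d * n) → ℝ := fun k => (lam (b k) - lt) ^ q k * lt ^ (n - q k) with hadef
  have ha_ne : ∀ k : Fin (d * n), a k ≠ 0 := by
    intro k
    apply mul_ne_zero
    · exact pow_ne_zero _ (sub_ne_zero.mpr (hlam_ne_lt _ (hbmem k)))
    · exact pow_ne_zero _ (ne_of_gt hltpos)
  -- the polynomials
  set R : ℕ → ℝ[X] := fun β => ∏ β' ∈ (Finset.Icc 1 d).erase β, (X + C (lam β')) ^ n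
    with hRdef
  set G : Fin (d * n) → ℝ[X] :=
    fun k => C (v k * a k) * ((X + C (lam (b k))) ^ (n - q k) * X ^ q k) with hGdef
  set P : ℝ[X] := ∑ k, G k * R (b k) with hPdef
  have hD : ∀ j, (0:ℝ) < ∏ β ∈ Finset.Icc 1 d, (lam β + t j) ^ n := by
    intro j
    apply Finset.prod_pos
    intro β hβ
    exact pow_pos (by linarith [hlam_pos β hβ, htpos j]) n
  -- evaluation of each term
  have hGR_eval : ∀ j k, (G k * R (b k)).eval (t j) =
      v k * (((lam (b k) - lt) * t j / (lam (b k) + t j)) ^ q k * lt ^ (n - q k)) *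
        ∏ β ∈ Finset.Icc 1 d, (lam β + t j) ^ n := by
    intro j k
    have hden : lam (b k) + t j ≠ 0 := by
      have := hlam_pos _ (hbmem k); have := htpos j; positivity
    have hprod : ∏ β ∈ Finset.Icc 1 d, (lam β + t j) ^ n =
        (lam (b k) + t j) ^ n *
          ∏ β ∈ (Finset.Icc 1 d).erase (b k), (lam β + t j) ^ n :=
      (Finset.mul_prod_erase _ _ (hbmem k)).symm
    have hRe : (R (b k)).eval (t j) =
        ∏ β ∈ (Finset.Icc 1 d).erase (b k), (lam β + t j) ^ n := by
      simp [hRdef, eval_prod, add_comm]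
    have hpowsplit : (lam (b k) + t j) ^ n =
        (lam (b k) + t j) ^ (n - q k) * (lam (b k) + t j) ^ q k := by
      rw [← pow_add]
      congr 1
      have := hq2 k; omega
    rw [eval_mul, hRe, hGdef]
    simp only [eval_mul, eval_pow, eval_add, eval_C, eval_X]
    rw [hprod, hpowsplit, div_pow, mul_pow]
    have hpne : (lam (b k) + t j) ^ q k ≠ 0 := pow_ne_zero _ hden
    field_simp
    ring
  -- P vanishes at each t j
  have hPeval : ∀ j, P.eval (t j) = 0 := by
    intro j
    have h0 := congrFun hMv j
    simp only [Matrix.mulVec, dotProduct, Pi.zero_apply] at h0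
    have : P.eval (t j) = (∑ k, (Matrix.of fun j k : Fin (d * n) =>
        ((lam (b k) - lam (d + 1)) * t j / (lam (b k) + t j))
            ^ (((k : ℕ) + 1) - (b k - 1) * n) *
          lam (d + 1) ^ (b k * n - ((k : ℕ) + 1))) j k * v k) *
        ∏ β ∈ Finset.Icc 1 d, (lam β + t j) ^ n := by
      rw [hPdef, eval_finset_sum, Finset.sum_mul]
      apply Finset.sum_congr rfl
      intro k _
      rw [hGR_eval j k]
      simp only [Matrix.of_apply]
      rw [show ((k:ℕ)+1) - (b k - 1) * n = q k from rfl, ← hqsub k, ← hltdef]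
      ring
    rw [this, h0, zero_mul]
  -- P vanishes at 0
  have hG0 : ∀ k : Fin (d * n), (G k).eval 0 = 0 := by
    intro k
    simp only [hGdef, eval_mul, eval_pow, eval_X]
    rw [zero_pow (by have := hq1 k; omega)]
    ring
  have hP0 : P.eval 0 = 0 := by
    rw [hPdef, eval_finset_sum]
    apply Finset.sum_eq_zero
    intro k _
    rw [eval_mul, hG0 k, zero_mul]
  -- degree bound
  have hGdeg : ∀ k : Fin (d * n), (G k).natDegree ≤ n := by
    intro k
    refine le_trans (natDegree_C_mul_le _ _) ?_
    refine le_trans (natDegree_mul_le) ?_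
    have h1 : ((X + C (lam (b k))) ^ (n - q k) : ℝ[X]).natDegree ≤ n - q k := by
      refine le_trans (natDegree_pow_le) ?_
      simp [natDegree_X_add_C]
    have h2 : ((X : ℝ[X]) ^ q k).natDegree ≤ q k := by
      simp [natDegree_X_pow]
    have := hq2 k
    omega
  have hRdeg : ∀ k : Fin (d * n), (R (b k)).natDegree ≤ (d - 1) * n := by
    intro k
    refine le_trans (natDegree_prod_le _ _) ?_
    have hcard : ((Finset.Icc 1 d).erase (b k)).card = d - 1 := by
      rw [Finset.card_erase_of_mem (hbmem k), Nat.card_Icc]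
      omega
    calc ∑ β ∈ (Finset.Icc 1 d).erase (b k), ((X + C (lam β)) ^ n : ℝ[X]).natDegree
        ≤ ∑ β ∈ (Finset.Icc 1 d).erase (b k), n := by
          apply Finset.sum_le_sum
          intro β _
          refine le_trans (natDegree_pow_le) ?_
          simp [natDegree_X_add_C]
      _ = (d - 1) * n := by rw [Finset.sum_const, hcard, smul_eq_mul]
  have hPdeg : P.natDegree ≤ d * n := by
    rw [hPdef]
    apply natDegree_sum_le_of_forall_le
    intro k _
    refine le_trans (natDegree_mul_le) ?_
    have h1 := hGdeg k
    have h2 := hRdeg k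
    have h3 : n + (d - 1) * n = d * n := by
      obtain ⟨m, hm⟩ := Nat.exists_eq_add_of_le hd
      rw [hm]
      have h4 : 1 + m - 1 = m := by omega
      rw [h4]
      ring
    omega
  -- P = 0 : it has d*n+1 distinct roots
  have hPzero : P = 0 := by
    apply Polynomial.eq_zero_of_natDegree_lt_card_of_eval_eq_zero P
      (f := fun o : Option (Fin (d * n)) => Option.elim o 0 t)
    · intro o1 o2 heq
      match o1, o2 with
      | none, none => rfl
      | none, some j => exact absurd heq.symm (ne_of_gt (htpos j))
      | some j, none => exact absurd heq (ne_of_gt (htpos j))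
      | some j1, some j2 => exact congrArg _ (htdist heq)
    · intro o
      match o with
      | none => exact hP0
      | some j => exact hPeval j
    · rw [Fintype.card_option, Fintype.card_fin]
      omega
  -- regroup the sum by the value of b
  set Sb : ℕ → ℝ[X] := fun β => ∑ k ∈ Finset.univ.filter (fun k => b k = β), G k
    with hSbdef
  have hPSb : ∑ β ∈ Finset.Icc 1 d, Sb β * R β = P := by
    rw [hPdef, hSbdef]
    rw [← Finset.sum_fiberwise_of_maps_to (fun k _ => hbmem k) (fun k => G k * R (b k))]
    apply Finset.sum_congr rfl
    intro β _
    rw [Finset.sum_mul]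
    apply Finset.sum_congr rfl
    intro k hk
    simp only [Finset.mem_filter] at hk
    rw [hk.2]
  -- each Sb β = 0 for β ∈ Icc 1 d
  have hSb_eval0 : ∀ β, (Sb β).eval 0 = 0 := by
    intro β
    rw [hSbdef, eval_finset_sum]
    exact Finset.sum_eq_zero fun k _ => hG0 k
  have hSb_deg : ∀ β, (Sb β).natDegree ≤ n := by
    intro β
    exact natDegree_sum_le_of_forall_le _ _ fun k _ => hGdeg k
  have hSbzero : ∀ β ∈ Finset.Icc 1 d, Sb β = 0 := by
    intro β hβ
    -- (X + C (lam β))^n divides Sb β * R β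
    have hdvd1 : (X + C (lam β)) ^ n ∣ Sb β * R β := by
      have hsum : Sb β * R β = - ∑ β' ∈ (Finset.Icc 1 d).erase β, Sb β' * R β' := by
        have := Finset.add_sum_erase (Finset.Icc 1 d) (fun β' => Sb β' * R β') hβ
        rw [hPSb] at this
        rw [hPzero] at this
        linear_combination this
      rw [hsum]
      apply dvd_neg.mpr
      apply Finset.dvd_sum
      intro β' hβ'
      have hββ' : β ∈ (Finset.Icc 1 d).erase β' :=
        Finset.mem_erase.mpr ⟨Ne.symm (Finset.mem_erase.mp hβ').1, hβ⟩
      have : (X + C (lam β)) ^ n ∣ R β' :=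
        Finset.dvd_prod_of_mem (fun β'' => (X + C (lam β'')) ^ n) hββ'
      exact Dvd.dvd.mul_left this _
    have hprime : Prime (X + C (lam β) : ℝ[X]) := by
      have : (X + C (lam β) : ℝ[X]) = X - C (-(lam β)) := by
        rw [map_neg, sub_neg_eq_add]
      rw [this]
      exact prime_X_sub_C _
    have hnotdvd : ¬ (X + C (lam β) : ℝ[X]) ∣ R β := by
      intro ⟨c, hc⟩
      have heval : (R β).eval (-(lam β)) = 0 := by
        rw [hc, eval_mul, eval_add, eval_X, eval_C]
        ring
      rw [hRdef] at heval
      simp only [eval_prod, eval_pow, eval_add, eval_X, eval_C] at heval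
      rw [Finset.prod_eq_zero_iff] at heval
      obtain ⟨β', hβ', h0⟩ := heval
      have hne : lam β' ≠ lam β := by
        apply fun h => (Finset.ne_of_mem_erase hβ') (hdist ?_ ?_ h)
        · have := Finset.mem_of_mem_erase hβ'
          simp at this ⊢; omega
        · simp at hβ ⊢; omega
      have : -lam β + lam β' ≠ 0 := fun h => hne (by linarith)
      exact this (pow_eq_zero_iff (by omega) |>.mp h0)
    have hdvdS : (X + C (lam β)) ^ n ∣ Sb β :=
      hprime.pow_dvd_of_dvd_mul_right n hnotdvd hdvd1
    obtain ⟨u, hu⟩ := hdvdS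
    by_cases hu0 : u = 0
    · rw [hu, hu0, mul_zero]
    have hXCne : ((X + C (lam β)) ^ n : ℝ[X]) ≠ 0 :=
      pow_ne_zero _ (X_add_C_ne_zero (lam β))
    have hudeg : u.natDegree = 0 := by
      have := hSb_deg β
      rw [hu, natDegree_mul hXCne hu0] at this
      have : ((X + C (lam β)) ^ n : ℝ[X]).natDegree = n := by
        rw [natDegree_pow, natDegree_X_add_C, mul_one]
      omega
    obtain ⟨c, hc⟩ := natDegree_eq_zero.mp hudeg
    have hieval := hSb_eval0 β
    rw [hu, eval_mul, ← hc, eval_C, eval_pow, eval_add, eval_X, eval_C, zero_add] at hieval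
    have hlamβ : (0:ℝ) < lam β := hlam_pos β hβ
    have hc0 : c = 0 := by
      have := pow_ne_zero n (ne_of_gt hlamβ)
      rcases mul_eq_zero.mp hieval with h | h
      · exact absurd h this
      · exact h
    exact absurd (by rw [← hc, hc0, map_zero]) hu0
  -- injectivity within a block: q determines k
  have hkinj : ∀ k k' : Fin (d * n), b k = b k' → q k = q k' → k = k' := by
    intro k k' hbeq hqeq
    have h1 := hkval k
    have h2 := hkval k'
    apply Fin.ext
    rw [hbeq, hqeq] at h1
    omega
  -- main induction: all v k = 0
  have hvzero : ∀ m : ℕ, ∀ k : Fin (d * n), q k = m → v k = 0 := by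
    intro m
    induction m using Nat.strong_induction_on with
    | _ m ih =>
      intro k hqk
      have hScoeff := congrArg (fun p : ℝ[X] => p.coeff m) (hSbzero (b k) (hbmem k))
      simp only [coeff_zero] at hScoeff
      rw [hSbdef] at hScoeff
      rw [finset_sum_coeff] at hScoeff
      have hmemk : k ∈ Finset.univ.filter (fun k' => b k' = b k) :=
        Finset.mem_filter.mpr ⟨Finset.mem_univ k, rfl⟩
      have hzero : ∀ k' ∈ Finset.univ.filter (fun k' => b k' = b k), k' ≠ k →
          (G k').coeff m = 0 := by
        intro k' hk' hne
        simp only [Finset.mem_filter, Finset.mem_univ, true_and] at hk'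
        rw [hGdef]
        simp only [coeff_C_mul]
        rcases lt_trichotomy (q k') m with hlt | heq | hgt
        · rw [ih (q k') hlt k' rfl]
          ring
        · exact absurd (hkinj k' k (by rw [hk']) (by rw [heq, hqk])) hne
        · rw [coeff_mul_X_pow']
          rw [if_neg (by omega)]
          ring
      rw [Finset.sum_eq_single_of_mem k hmemk hzero] at hScoeff
      · -- extract v k = 0 from the single term
        rw [hGdef] at hScoeff
        simp only [coeff_C_mul] at hScoeff
        rw [hqk, coeff_mul_X_pow'] at hScoeff
        simp only [le_refl, if_true, Nat.sub_self] at hScoeff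
        rw [coeff_X_add_C_pow] at hScoeff
        simp only [Nat.choose_zero_right, Nat.cast_one, mul_one, Nat.sub_zero] at hScoeff
        have hlamn : lam (b k) ^ (n - q k) ≠ 0 :=
          pow_ne_zero _ (ne_of_gt (hlam_pos _ (hbmem k)))
        rw [hqk] at hlamn
        rcases mul_eq_zero.mp hScoeff with h | h
        · rcases mul_eq_zero.mp h with h' | h'
          · exact h'
          · exact absurd h' (ha_ne k)
        · exact absurd h hlamn
  have : v = 0 := by
    funext k
    exact hvzero (q k) k rfl
  exact hv0 this
end

section
/- The functions {t ↦ Λ_k(t)^q : k ∈ [d], q ∈ [n]}, where Λ_k(t) = (λ_k − λ_{d+1}) t/(λ_k + t) and λ_1, …, λ_{d+1} are distinct positive reals, are linearly independent in the vector space of real functions on (0, ∞). -/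
open Polynomial Finset

/-- Triangular linear independence of the polynomials `X^{q+1}(X+l)^{n-1-q}`. -/
lemma stmt16_aux_tri (n : ℕ) (l : ℝ) (hl : l ≠ 0) (b : Fin n → ℝ)
    (h : ∑ q : Fin n, C (b q) * ((X + C l) ^ (n - 1 - (q:ℕ)) * X ^ ((q:ℕ) + 1)) = 0) :
    ∀ q, b q = 0 := by
  suffices H : ∀ m : ℕ, ∀ q : Fin n, (q:ℕ) = m → b q = 0 by intro q; exact H q q rfl
  intro m
  induction m using Nat.strong_induction_on with
  | _ m ih =>
  intro q hq
  have hc := congrArg (fun p => Polynomial.coeff p ((q:ℕ)+1)) h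
  simp only [finset_sum_coeff, coeff_zero, coeff_C_mul, coeff_mul_X_pow'] at hc
  rw [Finset.sum_eq_single q] at hc
  · simp only [le_refl, if_true, Nat.sub_self, coeff_zero_eq_eval_zero] at hc
    simp only [eval_pow, eval_add, eval_X, eval_C, zero_add] at hc
    rcases mul_eq_zero.1 hc with h1 | h1
    · exact h1
    · exact absurd h1 (pow_ne_zero _ hl)
  · intro q' _ hne
    have hval : (q':ℕ) ≠ (q:ℕ) := fun hh => hne (Fin.ext hh)
    rcases hval.lt_or_gt with h1 | h1
    · rw [ih q' (hq ▸ h1) q' rfl, zero_mul]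
    · rw [if_neg (by omega), mul_zero]
  · simp

/-- A polynomial of degree at most `n`, divisible by `(X+l)^n` and vanishing at `0`,
is zero (for `l ≠ 0`). -/
lemma stmt16_aux_dvd (n : ℕ) (l : ℝ) (hl : l ≠ 0) (Q : ℝ[X]) (hdeg : Q.natDegree ≤ n)
    (hdvd : (X + C l) ^ n ∣ Q) (h0 : Q.eval 0 = 0) : Q = 0 := by
  obtain ⟨s, rfl⟩ := hdvd
  rcases eq_or_ne s 0 with rfl | hs
  · simp
  · exfalso
    have hR : ((X + C l) ^ n).natDegree = n := by
      simp [natDegree_pow, natDegree_X_add_C]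
    have hRne : (X + C l) ^ n ≠ 0 := pow_ne_zero _ (X_add_C_ne_zero l)
    have hnd : n + s.natDegree ≤ n := by
      have := natDegree_mul hRne hs
      omega
    have hs0 : s.natDegree = 0 := by omega
    obtain ⟨a, rfl⟩ := natDegree_eq_zero.1 hs0
    have : l ^ n * a = 0 := by simpa using h0
    rcases mul_eq_zero.1 this with h1 | h1
    · exact pow_ne_zero _ hl h1
    · exact hs (by simp [h1])

/-- linear independence of the functions
`t ↦ Λ_k(t)^q` for `k ∈ [d]`, `q ∈ [n]`, on `(0, ∞)`, where
`Λ_k(t) = (λ_k − λ_{d+1}) t/(λ_k + t)` with distinct positive rates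
`λ_1, …, λ_{d+1}`. -/
theorem stmt16 {d n : ℕ} (lam : Fin (d + 1) → ℝ) (hpos : ∀ k, 0 < lam k)
    (hdist : Function.Injective lam) :
    LinearIndependent ℝ (fun p : Fin d × Fin n =>
      fun t : Set.Ioi (0 : ℝ) =>
        ((lam p.1.castSucc - lam (Fin.last d)) * (t : ℝ) /
            (lam p.1.castSucc + (t : ℝ))) ^ ((p.2 : ℕ) + 1)) := by
  classical
  rw [Fintype.linearIndependent_iff]
  intro g hg
  -- abbreviations
  have hcne : ∀ k : Fin d, lam k.castSucc - lam (Fin.last d) ≠ 0 := fun k =>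
    sub_ne_zero_of_ne (fun h => (Fin.castSucc_lt_last k).ne (hdist h))
  have hμpos : ∀ k : Fin d, 0 < lam k.castSucc := fun k => hpos _
  set Q : Fin d → Polynomial ℝ := fun k =>
    ∑ q : Fin n, C (g (k,q) * (lam k.castSucc - lam (Fin.last d)) ^ ((q:ℕ)+1)) *
      ((X + C (lam k.castSucc)) ^ (n - 1 - (q:ℕ)) * X ^ ((q:ℕ)+1)) with hQdef
  set P : Polynomial ℝ :=
    ∑ k : Fin d, Q k * ∏ j ∈ univ.erase k, (X + C (lam j.castSucc)) ^ n with hPdef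
  -- Step 1: P vanishes on (0, ∞)
  have hPeval : ∀ t : ℝ, 0 < t → P.eval t = 0 := by
    intro t ht
    have hgt := congrFun hg ⟨t, ht⟩
    simp only [Finset.sum_apply, Pi.smul_apply, smul_eq_mul, Pi.zero_apply] at hgt
    have hD : ∀ j : Fin d, lam j.castSucc + t ≠ 0 := fun j => (add_pos (hμpos j) ht).ne'
    have key : P.eval t =
        (∑ p : Fin d × Fin n, g p *
          ((lam p.1.castSucc - lam (Fin.last d)) * t / (lam p.1.castSucc + t)) ^ ((p.2:ℕ)+1)) *
        ∏ j : Fin d, (t + lam j.castSucc) ^ n := by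
      rw [Finset.sum_mul, Fintype.sum_prod_type]
      simp only [hPdef, hQdef, eval_finset_sum, eval_mul, eval_prod, eval_pow, eval_add,
        eval_X, eval_C, Finset.sum_mul]
      refine Finset.sum_congr rfl (fun k _ => Finset.sum_congr rfl (fun q _ => ?_))
      rw [← Finset.mul_prod_erase univ (fun j => (t + lam j.castSucc) ^ n) (mem_univ k)]
      have hsplit : (t + lam k.castSucc) ^ n
          = (t + lam k.castSucc) ^ ((q:ℕ)+1) * (t + lam k.castSucc) ^ (n - 1 - (q:ℕ)) := by
        rw [← pow_add]; congr 1; have := q.isLt; omega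
      rw [hsplit, div_pow, mul_pow, add_comm t (lam k.castSucc)]
      have h1 : (lam k.castSucc + t) ^ ((q:ℕ)+1) ≠ 0 := pow_ne_zero _ (hD k)
      field_simp
    rw [key, hgt, zero_mul]
  -- Step 2: P = 0 as a polynomial
  have hP0 : P = 0 := by
    apply eq_zero_of_infinite_isRoot
    apply Set.Infinite.mono (s := Set.Ioi (0:ℝ))
    · intro t ht
      exact hPeval t ht
    · exact Set.Ioi_infinite 0
  -- Step 3: each Q k = 0
  have hQ0 : ∀ k : Fin d, Q k = 0 := by
    intro k
    have hdvd : (X + C (lam k.castSucc)) ^ n ∣ Q k := by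
      have hcop : IsCoprime ((X + C (lam k.castSucc)) ^ n)
          (∏ j ∈ univ.erase k, (X + C (lam j.castSucc)) ^ n) := by
        apply IsCoprime.pow_left
        apply IsCoprime.prod_right
        intro j hj
        apply IsCoprime.pow_right
        have hne : IsUnit (-lam k.castSucc - -lam j.castSucc) :=
          (sub_ne_zero_of_ne (fun h => (mem_erase.1 hj).1
            (Fin.castSucc_injective d (hdist (neg_injective h))).symm)).isUnit
        have := Polynomial.isCoprime_X_sub_C_of_isUnit_sub hne
        simpa [sub_neg_eq_add] using this
      apply hcop.dvd_of_dvd_mul_right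
      have hsum := Finset.add_sum_erase univ
        (fun k => Q k * ∏ j ∈ univ.erase k, (X + C (lam j.castSucc)) ^ n) (mem_univ k)
      have heq : Q k * ∏ j ∈ univ.erase k, (X + C (lam j.castSucc)) ^ n
          = - ∑ k' ∈ univ.erase k, Q k' * ∏ j ∈ univ.erase k', (X + C (lam j.castSucc)) ^ n := by
        have h' := hP0
        rw [hPdef, ← hsum] at h'
        exact eq_neg_of_add_eq_zero_left h'
      rw [heq]
      rw [dvd_neg]
      apply Finset.dvd_sum
      intro k' hk'
      apply dvd_mul_of_dvd_right
      apply Finset.dvd_prod_of_mem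
      exact mem_erase.2 ⟨fun h => (mem_erase.1 hk').1 h.symm, mem_univ k⟩
    have hdeg : (Q k).natDegree ≤ n := by
      apply natDegree_sum_le_of_forall_le
      intro q _
      apply le_trans (natDegree_mul_le)
      have h1 : ((X + C (lam k.castSucc)) ^ (n - 1 - (q:ℕ)) * X ^ ((q:ℕ)+1)).natDegree
          ≤ n := by
        apply le_trans (natDegree_mul_le)
        rw [natDegree_pow, natDegree_X_add_C, natDegree_X_pow]
        have := q.isLt
        omega
      simp only [natDegree_C, zero_add]
      exact h1
    have h0 : (Q k).eval 0 = 0 := by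
      rw [hQdef]
      simp [eval_finset_sum]
    exact stmt16_aux_dvd n (lam k.castSucc) (hμpos k).ne' (Q k) hdeg hdvd h0
  -- Step 4: extract the coefficients
  intro p
  obtain ⟨k, q⟩ := p
  have := stmt16_aux_tri n (lam k.castSucc) (hμpos k).ne'
    (fun q => g (k,q) * (lam k.castSucc - lam (Fin.last d)) ^ ((q:ℕ)+1)) (hQ0 k) q
  rcases mul_eq_zero.1 this with h1 | h1
  · exact h1
  · exact absurd h1 (pow_ne_zero _ (hcne k))
end
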